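/- arXiv:2502.20716 — 4 statements merged into one kernel-verified Lean document; each statement's English description precedes it below -/
import Mathlib

section
/- Let {z_n} and {z'_n} be frames for a Krein space (K, [.,.]) with upper frame bounds β₁ and β₂ respectively. If for every σ ⊂ ℕ there is α > 0 (independent of σ) such that the weaving frame operator satisfies ‖S_σ k‖_J ≥ α‖k‖_J for all k ∈ K, then {z_n} and {z'_n} are weaving frames with universal lower bound α²/(β₁ + β₂) and universal upper bound β₁ + β₂. -/
open scoped InnerProductSpace

/-!
Write `W(k)` for the square sum of the analysis coefficients of the woven family and `S = S_σ`.
Cauchy–Schwarz, first in each of the two series and then in `ℝ²`, gives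
`‖⟪h, S k⟫‖ ≤ √W(k) √W(h)`. Taking `h = S k` and using the Bessel bound
`W(h) ≤ (β₁ + β₂)‖h‖²` (a sum over a subfamily is at most the full sum) yields
`‖S k‖² ≤ (β₁ + β₂) W(k)`, and `α‖k‖ ≤ ‖S k‖` turns this into the lower weaving bound.
-/
theorem Real.summable_mul_and_tsum_mul_le_sqrt_mul_sqrt {ι : Type*} {f g : ι → ℝ}
    (hf : ∀ i, 0 ≤ f i) (hg : ∀ i, 0 ≤ g i) (hf_sum : Summable fun i => f i ^ 2)
    (hg_sum : Summable fun i => g i ^ 2) :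
    (Summable fun i => f i * g i) ∧
      ∑' i, f i * g i ≤ √(∑' i, f i ^ 2) * √(∑' i, g i ^ 2) := by
  have := Real.summable_and_inner_le_Lp_mul_Lq_tsum_of_nonneg .two_two hf hg
    (by simpa only [Real.rpow_two] using hf_sum) (by simpa only [Real.rpow_two] using hg_sum)
  simpa only [Real.rpow_two, Real.sqrt_eq_rpow] using this

theorem Real.sqrt_mul_sqrt_add_sqrt_mul_sqrt_le {a b c d : ℝ} (ha : 0 ≤ a) (hb : 0 ≤ b)
    (hc : 0 ≤ c) (hd : 0 ≤ d) :
    √a * √b + √c * √d ≤ √(a + c) * √(b + d) := by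
  simpa [Fin.sum_univ_two] using
    Real.sum_sqrt_mul_sqrt_le Finset.univ (f := ![a, c]) (g := ![b, d])
      (fun i => by fin_cases i <;> assumption) (fun i => by fin_cases i <;> assumption)

section Weaving

variable {𝕜 E ι : Type*} [RCLike 𝕜] [NormedAddCommGroup E] [InnerProductSpace 𝕜 E]

theorem summable_norm_inner_sq_of_lower_bound {v : ι → E} {a : ℝ} (ha : 0 < a)
    (hv : ∀ k, a * ‖k‖ ^ 2 ≤ ∑' i, ‖⟪k, v i⟫_𝕜‖ ^ 2) (k : E) :
    Summable fun i => ‖⟪k, v i⟫_𝕜‖ ^ 2 := by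
  by_contra hs
  have hk : k = 0 := by
    have := hv k
    rw [tsum_eq_zero_of_not_summable hs] at this
    simpa using nonpos_of_mul_nonpos_right this ha
  subst hk
  simp at hs

theorem norm_inner_tsum_inner_smul_le (v : ι → E) (k h : E)
    (hk : Summable fun i => ‖⟪k, v i⟫_𝕜‖ ^ 2) (hh : Summable fun i => ‖⟪h, v i⟫_𝕜‖ ^ 2) :
    ‖⟪h, ∑' i, ⟪k, v i⟫_𝕜 • v i⟫_𝕜‖ ≤
      √(∑' i, ‖⟪k, v i⟫_𝕜‖ ^ 2) * √(∑' i, ‖⟪h, v i⟫_𝕜‖ ^ 2) := by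
  by_cases hsum : Summable fun i => ⟪k, v i⟫_𝕜 • v i
  · obtain ⟨hprod, hcs⟩ := Real.summable_mul_and_tsum_mul_le_sqrt_mul_sqrt
      (fun _ => norm_nonneg _) (fun _ => norm_nonneg _) hk hh
    have hexpand : ⟪h, ∑' i, ⟪k, v i⟫_𝕜 • v i⟫_𝕜 = ∑' i, ⟪k, v i⟫_𝕜 * ⟪h, v i⟫_𝕜 := by
      simpa [inner_smul_right] using (innerSL 𝕜 h).map_tsum hsum
    calc ‖⟪h, ∑' i, ⟪k, v i⟫_𝕜 • v i⟫_𝕜‖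
        ≤ ∑' i, ‖⟪k, v i⟫_𝕜 * ⟪h, v i⟫_𝕜‖ :=
          hexpand ▸ norm_tsum_le_tsum_norm (by simpa only [norm_mul] using hprod)
      _ ≤ _ := by simpa only [norm_mul] using hcs
  · -- a divergent `tsum` is `0`
    rw [tsum_eq_zero_of_not_summable hsum, inner_zero_right, norm_zero]
    positivity

variable (𝕜) in
noncomputable def wovenFrameOp (z z' : ι → E) (σ : Set ι) (k : E) : E :=
  (∑' n : σ, ⟪k, z n⟫_𝕜 • z n) + ∑' n : ↥σᶜ, ⟪k, z' n⟫_𝕜 • z' n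

variable (𝕜) in
noncomputable def wovenFrameSum (z z' : ι → E) (σ : Set ι) (k : E) : ℝ :=
  (∑' n : σ, ‖⟪k, z n⟫_𝕜‖ ^ 2) + ∑' n : ↥σᶜ, ‖⟪k, z' n⟫_𝕜‖ ^ 2

variable {z z' : ι → E} {σ : Set ι}

theorem wovenFrameSum_nonneg (k : E) : 0 ≤ wovenFrameSum 𝕜 z z' σ k :=
  add_nonneg (tsum_nonneg fun _ => sq_nonneg _) (tsum_nonneg fun _ => sq_nonneg _)

theorem wovenFrameSum_le {β β' : ℝ} (hz : ∀ k, Summable fun n => ‖⟪k, z n⟫_𝕜‖ ^ 2)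
    (hz' : ∀ k, Summable fun n => ‖⟪k, z' n⟫_𝕜‖ ^ 2)
    (hβ : ∀ k, ∑' n, ‖⟪k, z n⟫_𝕜‖ ^ 2 ≤ β * ‖k‖ ^ 2)
    (hβ' : ∀ k, ∑' n, ‖⟪k, z' n⟫_𝕜‖ ^ 2 ≤ β' * ‖k‖ ^ 2) (k : E) :
    wovenFrameSum 𝕜 z z' σ k ≤ (β + β') * ‖k‖ ^ 2 := by
  have h := (hz k).tsum_subtype_le _ σ fun _ => sq_nonneg _
  have h' := (hz' k).tsum_subtype_le _ σᶜ fun _ => sq_nonneg _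
  unfold wovenFrameSum
  linarith [hβ k, hβ' k]

theorem norm_inner_wovenFrameOp_le (hz : ∀ k, Summable fun n => ‖⟪k, z n⟫_𝕜‖ ^ 2)
    (hz' : ∀ k, Summable fun n => ‖⟪k, z' n⟫_𝕜‖ ^ 2) (k h : E) :
    ‖⟪h, wovenFrameOp 𝕜 z z' σ k⟫_𝕜‖ ≤
      √(wovenFrameSum 𝕜 z z' σ k) * √(wovenFrameSum 𝕜 z z' σ h) :=
  calc ‖⟪h, wovenFrameOp 𝕜 z z' σ k⟫_𝕜‖
      ≤ ‖⟪h, ∑' n : σ, ⟪k, z n⟫_𝕜 • z n⟫_𝕜‖ + ‖⟪h, ∑' n : ↥σᶜ, ⟪k, z' n⟫_𝕜 • z' n⟫_𝕜‖ := by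
        rw [wovenFrameOp, inner_add_right]
        exact norm_add_le _ _
    _ ≤ √(∑' n : σ, ‖⟪k, z n⟫_𝕜‖ ^ 2) * √(∑' n : σ, ‖⟪h, z n⟫_𝕜‖ ^ 2) +
          √(∑' n : ↥σᶜ, ‖⟪k, z' n⟫_𝕜‖ ^ 2) * √(∑' n : ↥σᶜ, ‖⟪h, z' n⟫_𝕜‖ ^ 2) :=
        add_le_add
          (norm_inner_tsum_inner_smul_le _ k h ((hz k).subtype σ) ((hz h).subtype σ))
          (norm_inner_tsum_inner_smul_le _ k h ((hz' k).subtype σᶜ) ((hz' h).subtype σᶜ))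
    _ ≤ _ := Real.sqrt_mul_sqrt_add_sqrt_mul_sqrt_le (tsum_nonneg fun _ => sq_nonneg _)
        (tsum_nonneg fun _ => sq_nonneg _) (tsum_nonneg fun _ => sq_nonneg _)
        (tsum_nonneg fun _ => sq_nonneg _)

theorem norm_wovenFrameOp_le {B : ℝ} (hz : ∀ k, Summable fun n => ‖⟪k, z n⟫_𝕜‖ ^ 2)
    (hz' : ∀ k, Summable fun n => ‖⟪k, z' n⟫_𝕜‖ ^ 2)
    (hB : ∀ h, wovenFrameSum 𝕜 z z' σ h ≤ B * ‖h‖ ^ 2) (k : E) :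
    ‖wovenFrameOp 𝕜 z z' σ k‖ ≤ √B * √(wovenFrameSum 𝕜 z z' σ k) := by
  set x := wovenFrameOp 𝕜 z z' σ k
  have hx : ‖x‖ * ‖x‖ ≤ √B * √(wovenFrameSum 𝕜 z z' σ k) * ‖x‖ :=
    calc ‖x‖ * ‖x‖ = ‖⟪x, x⟫_𝕜‖ := by simp [inner_self_eq_norm_sq_to_K, sq]
      _ ≤ √(wovenFrameSum 𝕜 z z' σ k) * √(wovenFrameSum 𝕜 z z' σ x) :=
        norm_inner_wovenFrameOp_le hz hz' k x
      _ ≤ √(wovenFrameSum 𝕜 z z' σ k) * √(B * ‖x‖ ^ 2) := by gcongr; exact hB x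
      _ = √B * √(wovenFrameSum 𝕜 z z' σ k) * ‖x‖ := by
        rw [Real.sqrt_mul' B (sq_nonneg _), Real.sqrt_sq (norm_nonneg _)]
        ring
  rcases (norm_nonneg x).eq_or_lt with h0 | hpos
  · rw [← h0]
    positivity
  · exact le_of_mul_le_mul_right hx hpos

end Weaving

theorem weaving_of_frame_operator_bounded_below_general
    {K : Type*} [NormedAddCommGroup K] [InnerProductSpace ℂ K]
    (z z' : ℕ → K) (α₁ β₁ α₂ β₂ : ℝ)
    (hα₁ : 0 < α₁) (hα₁β₁ : α₁ ≤ β₁) (hα₂ : 0 < α₂) (hα₂β₂ : α₂ ≤ β₂)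
    (hz : ∀ k : K, α₁ * ‖k‖ ^ 2 ≤ ∑' n : ℕ, ‖⟪k, z n⟫_ℂ‖ ^ 2 ∧
      ∑' n : ℕ, ‖⟪k, z n⟫_ℂ‖ ^ 2 ≤ β₁ * ‖k‖ ^ 2)
    (hz' : ∀ k : K, α₂ * ‖k‖ ^ 2 ≤ ∑' n : ℕ, ‖⟪k, z' n⟫_ℂ‖ ^ 2 ∧
      ∑' n : ℕ, ‖⟪k, z' n⟫_ℂ‖ ^ 2 ≤ β₂ * ‖k‖ ^ 2)
    (α : ℝ) (hα : 0 < α) (S : Set ℕ → K →L[ℂ] K)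
    (hS : ∀ (σ : Set ℕ) (k : K),
      S σ k = (∑' n : σ, ⟪k, z n⟫_ℂ • z n) + ∑' n : ↥σᶜ, ⟪k, z' n⟫_ℂ • z' n)
    (hSb : ∀ (σ : Set ℕ) (k : K), α * ‖k‖ ≤ ‖S σ k‖) :
    ∀ (σ : Set ℕ) (k : K),
      α ^ 2 / (β₁ + β₂) * ‖k‖ ^ 2 ≤
        (∑' n : σ, ‖⟪k, z n⟫_ℂ‖ ^ 2) + ∑' n : ↥σᶜ, ‖⟪k, z' n⟫_ℂ‖ ^ 2 ∧
      (∑' n : σ, ‖⟪k, z n⟫_ℂ‖ ^ 2) + ∑' n : ↥σᶜ, ‖⟪k, z' n⟫_ℂ‖ ^ 2 ≤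
        (β₁ + β₂) * ‖k‖ ^ 2 := by
  intro σ k
  have hβ : 0 < β₁ + β₂ := by linarith
  have hz_sum := summable_norm_inner_sq_of_lower_bound hα₁ fun k => (hz k).1
  have hz'_sum := summable_norm_inner_sq_of_lower_bound hα₂ fun k => (hz' k).1
  have hupper : ∀ h : K, wovenFrameSum ℂ z z' σ h ≤ (β₁ + β₂) * ‖h‖ ^ 2 :=
    wovenFrameSum_le hz_sum hz'_sum (fun k => (hz k).2) (fun k => (hz' k).2)
  refine ⟨?_, hupper k⟩
  have hSk : α * ‖k‖ ≤ √(β₁ + β₂) * √(wovenFrameSum ℂ z z' σ k) :=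
    (hSb σ k).trans (hS σ k ▸ norm_wovenFrameOp_le hz_sum hz'_sum hupper k)
  have hαk : α ^ 2 * ‖k‖ ^ 2 ≤ (β₁ + β₂) * wovenFrameSum ℂ z z' σ k := by
    simpa [mul_pow, Real.sq_sqrt hβ.le, Real.sq_sqrt (wovenFrameSum_nonneg k)] using
      pow_le_pow_left₀ (by positivity) hSk 2
  rw [div_mul_eq_mul_div, div_le_iff₀' hβ]
  exact hαk

/-- Let `{z_n}`, `{z'_n}` be frames for a Krein space (frame
inequalities in the associated Hilbert space `(K, [.,.]_J)`) with upper frame bounds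
`β₁`, `β₂`. If for every `σ ⊆ ℕ` the weaving frame operator
`S_σ k = Σ_{n∈σ}[k,z_n]_J z_n + Σ_{n∈σᶜ}[k,z'_n]_J z'_n` satisfies
`‖S_σ k‖_J ≥ α‖k‖_J` for all `k`, with `α > 0` independent of `σ`, then `{z_n}` and
`{z'_n}` are weaving frames with universal lower bound `α²/(β₁+β₂)` and universal
upper bound `β₁ + β₂`. -/
theorem weaving_of_frame_operator_bounded_below
    {K : Type*} [NormedAddCommGroup K] [InnerProductSpace ℂ K] [CompleteSpace K]
    (z z' : ℕ → K) (α₁ β₁ α₂ β₂ : ℝ)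
    (hα₁ : 0 < α₁) (hα₁β₁ : α₁ ≤ β₁) (hα₂ : 0 < α₂) (hα₂β₂ : α₂ ≤ β₂)
    (hz : ∀ k : K, α₁ * ‖k‖ ^ 2 ≤ ∑' n : ℕ, ‖⟪k, z n⟫_ℂ‖ ^ 2 ∧
      ∑' n : ℕ, ‖⟪k, z n⟫_ℂ‖ ^ 2 ≤ β₁ * ‖k‖ ^ 2)
    (hz' : ∀ k : K, α₂ * ‖k‖ ^ 2 ≤ ∑' n : ℕ, ‖⟪k, z' n⟫_ℂ‖ ^ 2 ∧
      ∑' n : ℕ, ‖⟪k, z' n⟫_ℂ‖ ^ 2 ≤ β₂ * ‖k‖ ^ 2)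
    (α : ℝ) (hα : 0 < α) (S : Set ℕ → K →L[ℂ] K)
    (hS : ∀ (σ : Set ℕ) (k : K),
      S σ k = (∑' n : σ, ⟪k, z n⟫_ℂ • z n) + ∑' n : ↥σᶜ, ⟪k, z' n⟫_ℂ • z' n)
    (hSb : ∀ (σ : Set ℕ) (k : K), α * ‖k‖ ≤ ‖S σ k‖) :
    ∀ (σ : Set ℕ) (k : K),
      α ^ 2 / (β₁ + β₂) * ‖k‖ ^ 2 ≤
        (∑' n : σ, ‖⟪k, z n⟫_ℂ‖ ^ 2) + ∑' n : ↥σᶜ, ‖⟪k, z' n⟫_ℂ‖ ^ 2 ∧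
      (∑' n : σ, ‖⟪k, z n⟫_ℂ‖ ^ 2) + ∑' n : ↥σᶜ, ‖⟪k, z' n⟫_ℂ‖ ^ 2 ≤
        (β₁ + β₂) * ‖k‖ ^ 2 :=
  weaving_of_frame_operator_bounded_below_general z z' α₁ β₁ α₂ β₂ hα₁ hα₁β₁ hα₂ hα₂β₂ hz hz' α hα S
    hS hSb
end

section
/- Let {z_n} be a frame for a Krein space (K, [.,.]) with bounds 0 < α ≤ β, and let U be a bounded operator on K with ‖I − U‖_J² < α/β. Then {z_n} and {Uz_n} are weaving frames for K; in particular, for every σ ⊂ ℕ, the family {z_n}_{n∈σ} ∪ {Uz_n}_{n∈σᶜ} is a frame with lower bound (√α − √β‖I − U*‖_J)² and upper bound β + ‖U‖_J²β. -/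
/-!
The woven family `{z_n}_{n∈σ} ∪ {U z_n}_{n∈σᶜ}` differs from `{z_n}` only by `(1 - U) z_n` on `σᶜ`,
and `⟪k, (1 - U) z_n⟫ = ⟪(1 - U*) k, z_n⟫`, so by the Bessel bound the coefficient sequences of
`k` against the two families are at `ℓ²`-distance at most `√β ‖1 - U*‖ ‖k‖`. Minkowski's inequality
in `ℓ²` then lowers the frame bound `√α ‖k‖` by exactly this amount, and `‖1 - U*‖ = ‖1 - U‖`
makes the result positive. The upper bound is the Bessel bound applied to `k` and to `U* k`.
-/

open scoped InnerProductSpace InnerProduct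

section EllTwo

variable {ι E : Type*} [NormedAddCommGroup E]

lemma memℓp_two_iff_summable {f : ι → E} : Memℓp f 2 ↔ Summable fun i => ‖f i‖ ^ 2 := by
  rw [memℓp_gen_iff (by norm_num)]
  norm_num

lemma lp.norm_two_eq_sqrt_tsum (f : lp (fun _ : ι => E) 2) : ‖f‖ = √(∑' i, ‖f i‖ ^ 2) := by
  have h := lp.norm_rpow_eq_tsum (p := 2) (by norm_num) f
  norm_num at h
  rw [← h, Real.sqrt_sq (norm_nonneg _)]

lemma sqrt_tsum_norm_add_sq_le {c d : ι → E}
    (hc : Summable fun i => ‖c i‖ ^ 2) (hd : Summable fun i => ‖d i‖ ^ 2) :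
    √(∑' i, ‖c i + d i‖ ^ 2) ≤ √(∑' i, ‖c i‖ ^ 2) + √(∑' i, ‖d i‖ ^ 2) := by
  let C : lp (fun _ : ι => E) 2 := ⟨c, memℓp_two_iff_summable.2 hc⟩
  let D : lp (fun _ : ι => E) 2 := ⟨d, memℓp_two_iff_summable.2 hd⟩
  have h := norm_add_le C D
  rw [lp.norm_two_eq_sqrt_tsum, lp.norm_two_eq_sqrt_tsum, lp.norm_two_eq_sqrt_tsum] at h
  exact h

theorem sq_sub_sqrt_mul_sq_le_tsum_norm_sq {a b : ι → E}
    (ha : Summable fun i => ‖a i‖ ^ 2) (hb : Summable fun i => ‖b i‖ ^ 2)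
    {α γ r : ℝ} (hγα : γ ≤ α) (hα : α * r ^ 2 ≤ ∑' i, ‖a i‖ ^ 2)
    (hγ : ∑' i, ‖a i - b i‖ ^ 2 ≤ γ * r ^ 2) :
    (√α - √γ) ^ 2 * r ^ 2 ≤ ∑' i, ‖b i‖ ^ 2 := by
  have hab : Summable fun i => ‖a i - b i‖ ^ 2 :=
    memℓp_two_iff_summable.1 <|
      (memℓp_two_iff_summable.2 ha).sub (memℓp_two_iff_summable.2 hb)
  have hmink : √(∑' i, ‖a i‖ ^ 2) ≤ √(∑' i, ‖a i - b i‖ ^ 2) + √(∑' i, ‖b i‖ ^ 2) := by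
    simpa only [sub_add_cancel] using sqrt_tsum_norm_add_sq_le hab hb
  have hα' : √α * |r| ≤ √(∑' i, ‖a i‖ ^ 2) := by
    rw [← Real.sqrt_sq_eq_abs, ← Real.sqrt_mul' _ (sq_nonneg r)]
    exact Real.sqrt_le_sqrt hα
  have hγ' : √(∑' i, ‖a i - b i‖ ^ 2) ≤ √γ * |r| := by
    rw [← Real.sqrt_sq_eq_abs, ← Real.sqrt_mul' _ (sq_nonneg r)]
    exact Real.sqrt_le_sqrt hγ
  have hnonneg : 0 ≤ (√α - √γ) * |r| :=
    mul_nonneg (sub_nonneg.2 (Real.sqrt_le_sqrt hγα)) (abs_nonneg r)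
  have key : (√α - √γ) * |r| ≤ √(∑' i, ‖b i‖ ^ 2) := by linarith
  rw [← sq_abs r, ← mul_pow]
  exact (Real.le_sqrt hnonneg (tsum_nonneg fun i => by positivity)).1 key

end EllTwo

section Piecewise

variable {ι M : Type*} {σ : Set ι} [DecidablePred (· ∈ σ)] {f g : ι → M}

lemma piecewise_comp_val : σ.piecewise f g ∘ ((↑) : σ → ι) = f ∘ (↑) :=
  funext fun i => σ.piecewise_eq_of_mem f g i.2

lemma piecewise_comp_val_compl : σ.piecewise f g ∘ ((↑) : ↥σᶜ → ι) = g ∘ (↑) :=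
  funext fun i => σ.piecewise_eq_of_notMem f g i.2

variable [AddCommMonoid M] [TopologicalSpace M] [ContinuousAdd M]

lemma Summable.piecewise (hf : Summable (f ∘ ((↑) : σ → ι)))
    (hg : Summable (g ∘ ((↑) : ↥σᶜ → ι))) : Summable (σ.piecewise f g) :=
  Summable.add_compl (s := σ) (by rwa [piecewise_comp_val]) (by rwa [piecewise_comp_val_compl])

lemma tsum_piecewise [T2Space M] (hf : Summable (f ∘ ((↑) : σ → ι)))
    (hg : Summable (g ∘ ((↑) : ↥σᶜ → ι))) :
    ∑' i, σ.piecewise f g i = ∑' i : σ, f i + ∑' i : ↥σᶜ, g i := by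
  rw [← Summable.tsum_add_tsum_compl (s := σ) (by rwa [piecewise_comp_val])
    (by rwa [piecewise_comp_val_compl])]
  exact congrArg₂ (· + ·) (tsum_congr fun i => σ.piecewise_eq_of_mem f g i.2)
    (tsum_congr fun i => σ.piecewise_eq_of_notMem f g i.2)

end Piecewise

section Frames

variable {𝕜 K ι : Type*} [RCLike 𝕜] [NormedAddCommGroup K] [InnerProductSpace 𝕜 K]

lemma summable_norm_inner_sq_of_lower_frame_bound {z : ι → K} {α : ℝ} (hα : 0 < α)
    (hlow : ∀ k : K, α * ‖k‖ ^ 2 ≤ ∑' i, ‖⟪k, z i⟫_𝕜‖ ^ 2) (k : K) :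
    Summable fun i => ‖⟪k, z i⟫_𝕜‖ ^ 2 := by
  rcases eq_or_ne k 0 with rfl | hk
  · simp
  by_contra hs
  have := hlow k
  rw [tsum_eq_zero_of_not_summable hs] at this
  exact (mul_pos hα (by positivity)).not_ge this

variable [CompleteSpace K]

lemma norm_one_sub_adjoint (U : K →L[𝕜] K) : ‖(1 : K →L[𝕜] K) - U†‖ = ‖1 - U‖ := by
  rw [← ContinuousLinearMap.adjoint.norm_map, map_sub, ContinuousLinearMap.adjoint_one,
    ContinuousLinearMap.adjoint_adjoint]

variable {z : ι → K} (U : K →L[𝕜] K) (σ : Set ι) (k : K)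

omit [CompleteSpace K] in
lemma norm_inner_piecewise_sq [DecidablePred (· ∈ σ)] :
    (fun i => ‖⟪k, σ.piecewise z (U ∘ z) i⟫_𝕜‖ ^ 2) =
      σ.piecewise (fun i => ‖⟪k, z i⟫_𝕜‖ ^ 2) (fun i => ‖⟪k, U (z i)⟫_𝕜‖ ^ 2) := by
  ext i
  by_cases hi : i ∈ σ <;> simp [hi]

lemma summable_norm_inner_map_sq (hz : ∀ k : K, Summable fun i => ‖⟪k, z i⟫_𝕜‖ ^ 2) :
    Summable fun i => ‖⟪k, U (z i)⟫_𝕜‖ ^ 2 := by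
  simpa only [ContinuousLinearMap.adjoint_inner_left] using hz ((U†) k)

lemma tsum_norm_inner_sub_piecewise_sq_le [DecidablePred (· ∈ σ)] {β : ℝ} (hβ : 0 ≤ β)
    (hz : ∀ k : K, Summable fun i => ‖⟪k, z i⟫_𝕜‖ ^ 2)
    (hup : ∀ k : K, ∑' i, ‖⟪k, z i⟫_𝕜‖ ^ 2 ≤ β * ‖k‖ ^ 2) :
    ∑' i, ‖⟪k, z i⟫_𝕜 - ⟪k, σ.piecewise z (U ∘ z) i⟫_𝕜‖ ^ 2 ≤
      β * ‖(1 : K →L[𝕜] K) - U†‖ ^ 2 * ‖k‖ ^ 2 := by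
  set m := ((1 : K →L[𝕜] K) - U†) k
  have hterm : (fun i => ‖⟪k, z i⟫_𝕜 - ⟪k, σ.piecewise z (U ∘ z) i⟫_𝕜‖ ^ 2) =
      σ.piecewise (fun _ => 0) fun i => ‖⟪m, z i⟫_𝕜‖ ^ 2 := by
    ext i
    by_cases hi : i ∈ σ
    · simp [hi]
    · simp [hi, m, inner_sub_left, ContinuousLinearMap.adjoint_inner_left]
  calc ∑' i, ‖⟪k, z i⟫_𝕜 - ⟪k, σ.piecewise z (U ∘ z) i⟫_𝕜‖ ^ 2
      = ∑' i : ↥σᶜ, ‖⟪m, z i⟫_𝕜‖ ^ 2 := by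
        rw [hterm, tsum_piecewise (f := fun _ => (0 : ℝ)) summable_zero ((hz m).subtype _)]
        simp
    _ ≤ ∑' i, ‖⟪m, z i⟫_𝕜‖ ^ 2 := (hz m).tsum_subtype_le _ _ fun i => sq_nonneg _
    _ ≤ β * ‖m‖ ^ 2 := hup m
    _ ≤ β * (‖(1 : K →L[𝕜] K) - U†‖ * ‖k‖) ^ 2 := by
        gcongr
        exact ContinuousLinearMap.le_opNorm _ k
    _ = β * ‖(1 : K →L[𝕜] K) - U†‖ ^ 2 * ‖k‖ ^ 2 := by ring

lemma tsum_subtype_add_tsum_compl_norm_inner_map_sq_le {β : ℝ} (hβ : 0 ≤ β)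
    (hz : ∀ k : K, Summable fun i => ‖⟪k, z i⟫_𝕜‖ ^ 2)
    (hup : ∀ k : K, ∑' i, ‖⟪k, z i⟫_𝕜‖ ^ 2 ≤ β * ‖k‖ ^ 2) :
    ∑' i : σ, ‖⟪k, z i⟫_𝕜‖ ^ 2 + ∑' i : ↥σᶜ, ‖⟪k, U (z i)⟫_𝕜‖ ^ 2 ≤
      (β + ‖U‖ ^ 2 * β) * ‖k‖ ^ 2 := by
  simp_rw [← ContinuousLinearMap.adjoint_inner_left U]
  have hUk : ‖(U†) k‖ ≤ ‖U‖ * ‖k‖ := by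
    simpa only [ContinuousLinearMap.adjoint.norm_map] using (U†).le_opNorm k
  calc ∑' i : σ, ‖⟪k, z i⟫_𝕜‖ ^ 2 + ∑' i : ↥σᶜ, ‖⟪(U†) k, z i⟫_𝕜‖ ^ 2
      ≤ ∑' i, ‖⟪k, z i⟫_𝕜‖ ^ 2 + ∑' i, ‖⟪(U†) k, z i⟫_𝕜‖ ^ 2 :=
        add_le_add ((hz k).tsum_subtype_le _ _ fun i => sq_nonneg _)
          ((hz _).tsum_subtype_le _ _ fun i => sq_nonneg _)
    _ ≤ β * ‖k‖ ^ 2 + β * (‖U‖ * ‖k‖) ^ 2 := by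
        gcongr
        · exact hup k
        · exact (hup _).trans (by gcongr)
    _ = (β + ‖U‖ ^ 2 * β) * ‖k‖ ^ 2 := by ring

end Frames

/-- Let `{z_n}` be a frame for a Krein space with bounds
`0 < α ≤ β` (frame inequalities in the associated Hilbert space `(K, [.,.]_J)`) and
let `U` be a bounded operator with `‖I − U‖_J² < α/β`. Then `{z_n}` and `{U z_n}`
are weaving frames: for every `σ ⊆ ℕ`, the family `{z_n}_{n∈σ} ∪ {U z_n}_{n∈σᶜ}` is
a frame with lower bound `(√α − √β‖I − U*‖_J)²` (a positive number) and upper bound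
`β + ‖U‖_J² β`. -/
theorem weaving_of_operator_perturbation
    {K : Type*} [NormedAddCommGroup K] [InnerProductSpace ℂ K] [CompleteSpace K]
    (z : ℕ → K) (α β : ℝ) (hα : 0 < α) (hαβ : α ≤ β)
    (hframe : ∀ k : K, α * ‖k‖ ^ 2 ≤ ∑' n : ℕ, ‖⟪k, z n⟫_ℂ‖ ^ 2 ∧
      ∑' n : ℕ, ‖⟪k, z n⟫_ℂ‖ ^ 2 ≤ β * ‖k‖ ^ 2)
    (U : K →L[ℂ] K) (hU : ‖(1 : K →L[ℂ] K) - U‖ ^ 2 < α / β) :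
    0 < Real.sqrt α - Real.sqrt β *
        ‖(1 : K →L[ℂ] K) - ContinuousLinearMap.adjoint U‖ ∧
    ∀ (σ : Set ℕ) (k : K),
      (Real.sqrt α - Real.sqrt β *
          ‖(1 : K →L[ℂ] K) - ContinuousLinearMap.adjoint U‖) ^ 2 * ‖k‖ ^ 2 ≤
        (∑' n : σ, ‖⟪k, z n⟫_ℂ‖ ^ 2) + ∑' n : ↥σᶜ, ‖⟪k, U (z n)⟫_ℂ‖ ^ 2 ∧
      (∑' n : σ, ‖⟪k, z n⟫_ℂ‖ ^ 2) + ∑' n : ↥σᶜ, ‖⟪k, U (z n)⟫_ℂ‖ ^ 2 ≤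
        (β + ‖U‖ ^ 2 * β) * ‖k‖ ^ 2 := by
  classical
  have hβ : 0 < β := hα.trans_le hαβ
  have hsum := summable_norm_inner_sq_of_lower_frame_bound hα fun k => (hframe k).1
  have hbessel k := (hframe k).2
  have hsmall : β * ‖(1 : K →L[ℂ] K) - U†‖ ^ 2 < α := by
    rw [norm_one_sub_adjoint, mul_comm]
    exact (lt_div_iff₀ hβ).1 hU
  have hsqrt : √(β * ‖(1 : K →L[ℂ] K) - U†‖ ^ 2) = √β * ‖(1 : K →L[ℂ] K) - U†‖ := by
    rw [Real.sqrt_mul hβ.le, Real.sqrt_sq (norm_nonneg _)]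
  refine ⟨sub_pos.2 (hsqrt ▸ Real.sqrt_lt_sqrt (by positivity) hsmall), fun σ k => ⟨?_,
    tsum_subtype_add_tsum_compl_norm_inner_map_sq_le U σ k hβ.le hsum hbessel⟩⟩
  have hwoven := norm_inner_piecewise_sq U σ k (z := z)
  have hsumU := summable_norm_inner_map_sq U k hsum
  rw [← hsqrt, ← tsum_piecewise ((hsum k).subtype _) (hsumU.subtype _), ← hwoven]
  refine sq_sub_sqrt_mul_sq_le_tsum_norm_sq (hsum k) ?_ hsmall.le (hframe k).1
    (tsum_norm_inner_sub_piecewise_sq_le U σ k hβ.le hsum hbessel)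
  rw [hwoven]
  exact ((hsum k).subtype _).piecewise (hsumU.subtype _)
end

section
/- Let {z_n} and {z'_n} be weaving frames for a Krein space (K, [.,.]) with universal bounds α ≤ β. Fix σ ⊂ ℕ, let Z_σ = closure(span{z_n : n ∈ σ}), and let P be the orthogonal projection of K onto Z_σ^⊥ (orthogonality with respect to [.,.]_J). Then {P z'_n}_{n∈σᶜ} is a frame for Z_σ^⊥ with bounds α and β. -/
open scoped InnerProductSpace

/-! For `k ⊥ Z_σ` the `σ`-part of the weaving sum for `σ` vanishes, and `k` cannot distinguish
`z'_n` from `P z'_n` since their difference lies in `Z_σ`; so the weaving inequalities for `σ`,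
evaluated at `k`, are exactly the frame inequalities of `{P z'_n}_{n ∈ σᶜ}`. -/

section

variable {𝕜 E : Type*} [RCLike 𝕜] [NormedAddCommGroup E] [InnerProductSpace 𝕜 E]
  {Z : Submodule 𝕜 E} {k : E}

theorem inner_eq_inner_of_mem_orthogonal_of_sub_mem {x y : E} (hk : k ∈ Zᗮ) (hxy : x - y ∈ Z) :
    ⟪k, x⟫_𝕜 = ⟪k, y⟫_𝕜 := by
  rw [← sub_eq_zero, ← inner_sub_right]
  exact Submodule.inner_left_of_mem_orthogonal hxy hk

theorem tsum_norm_inner_sq_eq_zero_of_mem_orthogonal_closure_span {ι : Type*} {v : ι → E}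
    {s : Set ι} (hk : k ∈ (Submodule.span 𝕜 (v '' s)).topologicalClosureᗮ) :
    ∑' n : s, ‖⟪k, v n⟫_𝕜‖ ^ 2 = 0 := by
  have hv : ∀ n : s, v n ∈ (Submodule.span 𝕜 (v '' s)).topologicalClosure := fun n =>
    Submodule.le_topologicalClosure _ (Submodule.subset_span ⟨n, n.2, rfl⟩)
  simp [Submodule.inner_left_of_mem_orthogonal (hv _) hk]

end

theorem projected_family_frame_for_orthocomplement_general
    {K : Type*} [NormedAddCommGroup K] [InnerProductSpace ℂ K] [CompleteSpace K]
    (z z' : ℕ → K) (α β : ℝ)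
    (hweave : ∀ (τ : Set ℕ) (k : K),
      α * ‖k‖ ^ 2 ≤ (∑' n : τ, ‖⟪k, z n⟫_ℂ‖ ^ 2) + ∑' n : ↥τᶜ, ‖⟪k, z' n⟫_ℂ‖ ^ 2 ∧
      (∑' n : τ, ‖⟪k, z n⟫_ℂ‖ ^ 2) + ∑' n : ↥τᶜ, ‖⟪k, z' n⟫_ℂ‖ ^ 2 ≤ β * ‖k‖ ^ 2)
    (σ : Set ℕ)
    (Z : Submodule ℂ K) (hZ : Z = (Submodule.span ℂ (z '' σ)).topologicalClosure)
    (P : K →L[ℂ] K) (hP2 : ∀ k : K, k - P k ∈ Z) :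
    ∀ k ∈ Zᗮ,
      α * ‖k‖ ^ 2 ≤ ∑' n : ↥σᶜ, ‖⟪k, P (z' n)⟫_ℂ‖ ^ 2 ∧
      ∑' n : ↥σᶜ, ‖⟪k, P (z' n)⟫_ℂ‖ ^ 2 ≤ β * ‖k‖ ^ 2 := by
  intro k hk
  have hσ : ∑' n : σ, ‖⟪k, z n⟫_ℂ‖ ^ 2 = 0 :=
    tsum_norm_inner_sq_eq_zero_of_mem_orthogonal_closure_span (hZ ▸ hk)
  have hP (n : ℕ) : ⟪k, P (z' n)⟫_ℂ = ⟪k, z' n⟫_ℂ :=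
    (inner_eq_inner_of_mem_orthogonal_of_sub_mem hk (hP2 (z' n))).symm
  simpa only [hσ, zero_add, hP] using hweave σ k

/-- Let `{z_n}`, `{z'_n}` be weaving frames for a Krein space with
universal bounds `α ≤ β` (frame inequalities in the associated Hilbert space
`(K, [.,.]_J)`). Fix `σ ⊆ ℕ`, let `Z_σ` be the closed span of `{z_n : n ∈ σ}`, and
let `P` be the orthogonal projection of `K` onto `Z_σ^⊥` (orthogonality w.r.t.
`[.,.]_J`), i.e. `P k ∈ Z_σ^⊥` and `k − P k ∈ Z_σ` for all `k`. Then
`{P z'_n}_{n∈σᶜ}` is a frame for `Z_σ^⊥` with bounds `α` and `β`. -/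
theorem projected_family_frame_for_orthocomplement
    {K : Type*} [NormedAddCommGroup K] [InnerProductSpace ℂ K] [CompleteSpace K]
    (z z' : ℕ → K) (α β : ℝ) (hα : 0 < α) (hαβ : α ≤ β)
    (hweave : ∀ (τ : Set ℕ) (k : K),
      α * ‖k‖ ^ 2 ≤ (∑' n : τ, ‖⟪k, z n⟫_ℂ‖ ^ 2) + ∑' n : ↥τᶜ, ‖⟪k, z' n⟫_ℂ‖ ^ 2 ∧
      (∑' n : τ, ‖⟪k, z n⟫_ℂ‖ ^ 2) + ∑' n : ↥τᶜ, ‖⟪k, z' n⟫_ℂ‖ ^ 2 ≤ β * ‖k‖ ^ 2)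
    (σ : Set ℕ)
    (Z : Submodule ℂ K) (hZ : Z = (Submodule.span ℂ (z '' σ)).topologicalClosure)
    (P : K →L[ℂ] K) (hP1 : ∀ k : K, P k ∈ Zᗮ) (hP2 : ∀ k : K, k - P k ∈ Z) :
    ∀ k ∈ Zᗮ,
      α * ‖k‖ ^ 2 ≤ ∑' n : ↥σᶜ, ‖⟪k, P (z' n)⟫_ℂ‖ ^ 2 ∧
      ∑' n : ↥σᶜ, ‖⟪k, P (z' n)⟫_ℂ‖ ^ 2 ≤ β * ‖k‖ ^ 2 :=
  projected_family_frame_for_orthocomplement_general z z' α β hweave σ Z hZ P hP2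
end

section
/- In the Krein space (ℂ³, [.,.]) with [(k₁,k₂,k₃),(l₁,l₂,l₃)] = k₁l̄₁ + k₂l̄₂ − k₃l̄₃, the frames {z'_n} = {(1,2,0), (0,√2,0), (0,0,1)} and {z''_n} = {(0,−√2,0), (−2,0,0), (0,0,2)} are NOT weaving frames: for σ = {2}, the woven family {z'_2} ∪ {z''_1, z''_3} fails the lower frame inequality, since Σ|[k, f]|² over this family vanishes for k = (k₁, 0, 0) with k₁ ≠ 0. -/
/-- The indefinite inner product on `ℂ³`:
`[(k₁,k₂,k₃),(l₁,l₂,l₃)] = k₁l̄₁ + k₂l̄₂ − k₃l̄₃`. -/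
noncomputable def kreinC3 (k l : Fin 3 → ℂ) : ℂ :=
  k 0 * (starRingEnd ℂ) (l 0) + k 1 * (starRingEnd ℂ) (l 1) -
    k 2 * (starRingEnd ℂ) (l 2)

/-- The frame `{z'_n} = {(1,2,0), (0,√2,0), (0,0,1)}`. -/
noncomputable def zC3 : Fin 3 → Fin 3 → ℂ :=
  ![![1, 2, 0], ![0, (Real.sqrt 2 : ℂ), 0], ![0, 0, 1]]

/-- The frame `{z''_n} = {(0,−√2,0), (−2,0,0), (0,0,2)}`. -/
noncomputable def zC3' : Fin 3 → Fin 3 → ℂ :=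
  ![![0, -(Real.sqrt 2 : ℂ), 0], ![-2, 0, 0], ![0, 0, 2]]

/-!
Every vector of the woven family `{z'₂, z''₁, z''₃}` has first coordinate `0`, so every
`[k, ·]` with `k = (k₁, 0, 0)` vanishes on it; a nonzero vector annihilated by all the
frame functionals rules out any positive lower frame bound.
-/

theorem kreinC3_single_zero (k₁ : ℂ) (l : Fin 3 → ℂ) :
    kreinC3 ![k₁, 0, 0] l = k₁ * starRingEnd ℂ (l 0) := by
  simp [kreinC3]

theorem kreinC3_single_zero_eq_zero {l : Fin 3 → ℂ} (hl : l 0 = 0) (k₁ : ℂ) :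
    kreinC3 ![k₁, 0, 0] l = 0 := by
  rw [kreinC3_single_zero, hl, map_zero, mul_zero]

theorem not_exists_pos_lower_bound_of_eq_zero {E : Type*} (N S : E → ℝ) (k : E)
    (hN : 0 < N k) (hS : S k = 0) : ¬ ∃ α : ℝ, 0 < α ∧ ∀ k, α * N k ≤ S k := by
  rintro ⟨α, hα, h⟩
  have := h k
  rw [hS] at this
  linarith [mul_pos hα hN]

/-- In the Krein space `(ℂ³, [.,.])` with
`[(k₁,k₂,k₃),(l₁,l₂,l₃)] = k₁l̄₁ + k₂l̄₂ − k₃l̄₃`, the frames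
`{(1,2,0),(0,√2,0),(0,0,1)}` and `{(0,−√2,0),(−2,0,0),(0,0,2)}` are NOT weaving
frames: for `σ = {2}` the woven family `{z'₂} ∪ {z''₁, z''₃}` fails the lower frame
inequality, since the sum `Σ |[k, f]|²` over this family vanishes for every
`k = (k₁, 0, 0)`, so no lower frame bound `α > 0` exists. -/
theorem not_weaving_example_C3 :
    (∀ k₁ : ℂ,
      ‖kreinC3 ![k₁, 0, 0] (zC3 1)‖ ^ 2 + ‖kreinC3 ![k₁, 0, 0] (zC3' 0)‖ ^ 2 +
        ‖kreinC3 ![k₁, 0, 0] (zC3' 2)‖ ^ 2 = 0) ∧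
    ¬ ∃ α : ℝ, 0 < α ∧ ∀ k : Fin 3 → ℂ,
        α * (‖k 0‖ ^ 2 + ‖k 1‖ ^ 2 + ‖k 2‖ ^ 2) ≤
          ‖kreinC3 k (zC3 1)‖ ^ 2 + ‖kreinC3 k (zC3' 0)‖ ^ 2 +
            ‖kreinC3 k (zC3' 2)‖ ^ 2 := by
  have hvanish : ∀ k₁ : ℂ,
      ‖kreinC3 ![k₁, 0, 0] (zC3 1)‖ ^ 2 + ‖kreinC3 ![k₁, 0, 0] (zC3' 0)‖ ^ 2 +
        ‖kreinC3 ![k₁, 0, 0] (zC3' 2)‖ ^ 2 = 0 := fun k₁ => by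
    obtain ⟨h₁, h₂, h₃⟩ : zC3 1 0 = 0 ∧ zC3' 0 0 = 0 ∧ zC3' 2 0 = 0 := by simp [zC3, zC3']
    simp only [kreinC3_single_zero_eq_zero h₁, kreinC3_single_zero_eq_zero h₂,
      kreinC3_single_zero_eq_zero h₃, norm_zero]
    norm_num
  exact ⟨hvanish, not_exists_pos_lower_bound_of_eq_zero _ _ ![1, 0, 0] (by simp) (hvanish 1)⟩
end
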